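/- For all q, n ≥ 1, c̃_q(n) = φ*(q) · μ*(q/(n,q)_{**}) / φ*(q/(n,q)_{**}), where (n,q)_{**} is the greatest common unitary divisor of n and q. -/

import Mathlib

def uDivisors (n : ℕ) : Finset ℕ := n.divisors.filter (fun d => Nat.gcd d (n / d) = 1)

def mustar (n : ℕ) : ℤ := (-1) ^ n.primeFactors.card

def gcud (n q : ℕ) : ℕ := (uDivisors n ∩ uDivisors q).sup id

def ctilde (q n : ℕ) : ℤ := ∑ d ∈ uDivisors (gcud n q), (d : ℤ) * mustar (q / d)

/-- The unitary Euler function φ*(n) = Π_{p^ν ∥ n} (p^ν − 1). -/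
def phiStar (n : ℕ) : ℕ := ∏ p ∈ n.primeFactors, (p ^ n.factorization p - 1)

/-!
A unitary divisor `d ∥ m` is determined by its set `S` of prime factors: `d = ∏_{p ∈ S} p^{v_p(m)}`,
and `m / d` is the same product over the complementary set of primes of `m`. So
`∑_{d ∥ m} d μ*(m/d)` is the expansion of `∏_{p ∣ m} (p^{v_p(m)} - 1) = φ*(m)` over subsets `S`.
For `g = (n,q)_{**}`, a unitary divisor of `q`, every `q/d` with `d ∥ g` is the coprime product
`(g/d) (q/g)`, so `c̃_q(n) = φ*(g) μ*(q/g)`, while `φ*(q) = φ*(g) φ*(q/g)`.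
-/

open Finset

lemma mustar_mul {a b : ℕ} (hab : Nat.Coprime a b) : mustar (a * b) = mustar a * mustar b := by
  rw [mustar, mustar, mustar, hab.primeFactors_mul,
    card_union_of_disjoint hab.disjoint_primeFactors, pow_add]

lemma phiStar_mul {a b : ℕ} (hab : Nat.Coprime a b) :
    phiStar (a * b) = phiStar a * phiStar b := by
  have h (n : ℕ) : phiStar n = n.factorization.prod fun p k => p ^ k - 1 := rfl
  rw [h, h, h, Nat.factorization_mul_of_coprime hab,
    Finsupp.prod_add_index_of_disjoint hab.disjoint_primeFactors]

lemma phiStar_pos (m : ℕ) : 0 < phiStar m :=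
  prod_pos fun _ hp => Nat.sub_pos_of_lt <|
    Nat.one_lt_pow (Finsupp.mem_support_iff.mp hp) (Nat.prime_of_mem_primeFactors hp).one_lt

section UnitaryDivisors

variable {d m : ℕ} {S : Finset ℕ}

lemma mem_uDivisors : d ∈ uDivisors m ↔ d ∣ m ∧ m ≠ 0 ∧ Nat.Coprime d (m / d) := by
  simp [uDivisors, Nat.mem_divisors, Nat.Coprime, and_assoc]

lemma one_mem_uDivisors (hm : m ≠ 0) : 1 ∈ uDivisors m := by
  simp [mem_uDivisors, hm]

lemma factorization_eq_of_mem_uDivisors (hd : d ∈ uDivisors m) {p : ℕ}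
    (hp : p ∈ d.primeFactors) : m.factorization p = d.factorization p := by
  obtain ⟨hdm, -, hcop⟩ := mem_uDivisors.mp hd
  rw [← Nat.mul_div_cancel' hdm]
  exact Nat.factorization_eq_of_coprime_left hcop
    (Nat.mem_primeFactors_iff_mem_primeFactorsList.mp hp)

def unitaryPart (m : ℕ) (S : Finset ℕ) : ℕ := ∏ p ∈ S, p ^ m.factorization p

lemma factorization_unitaryPart (hS : S ⊆ m.primeFactors) (r : ℕ) :
    (unitaryPart m S).factorization r = if r ∈ S then m.factorization r else 0 := by
  have hprime : ∀ p ∈ S, p.Prime := fun p hp => Nat.prime_of_mem_primeFactors (hS hp)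
  rw [unitaryPart, Nat.factorization_prod fun p hp => pow_ne_zero _ (hprime p hp).ne_zero,
    Finsupp.finsetSum_apply,
    sum_congr rfl fun p hp => by rw [(hprime p hp).factorization_pow, Finsupp.single_apply]]
  simp

lemma primeFactors_unitaryPart (hS : S ⊆ m.primeFactors) :
    (unitaryPart m S).primeFactors = S := by
  ext r
  rw [← Nat.support_factorization, Finsupp.mem_support_iff, factorization_unitaryPart hS]
  by_cases hr : r ∈ S
  · simpa [hr] using Finsupp.mem_support_iff.mp (hS hr)
  · simp [hr]

lemma unitaryPart_mul_unitaryPart_sdiff (hm : m ≠ 0) (hS : S ⊆ m.primeFactors) :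
    unitaryPart m S * unitaryPart m (m.primeFactors \ S) = m := by
  rw [unitaryPart, unitaryPart, ← prod_union disjoint_sdiff, union_sdiff_of_subset hS,
    ← Nat.prod_primeFactors_pow_factorization hm]

lemma coprime_unitaryPart_of_disjoint {T : Finset ℕ} (hS : S ⊆ m.primeFactors)
    (hT : T ⊆ m.primeFactors) (hST : Disjoint S T) :
    Nat.Coprime (unitaryPart m S) (unitaryPart m T) :=
  Nat.Coprime.prod_left fun _ hp => Nat.Coprime.prod_right fun _ hr =>
    ((Nat.coprime_primes (Nat.prime_of_mem_primeFactors (hS hp))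
      (Nat.prime_of_mem_primeFactors (hT hr))).mpr (disjoint_left.mp hST hp <| · ▸ hr)).pow _ _

lemma div_unitaryPart (hm : m ≠ 0) (hS : S ⊆ m.primeFactors) :
    m / unitaryPart m S = unitaryPart m (m.primeFactors \ S) := by
  have h := unitaryPart_mul_unitaryPart_sdiff hm hS
  exact Nat.div_eq_of_eq_mul_right (Nat.pos_of_ne_zero (left_ne_zero_of_mul (h ▸ hm))) h.symm

lemma unitaryPart_mem_uDivisors (hm : m ≠ 0) (hS : S ⊆ m.primeFactors) :
    unitaryPart m S ∈ uDivisors m := by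
  refine mem_uDivisors.mpr ⟨⟨_, (unitaryPart_mul_unitaryPart_sdiff hm hS).symm⟩, hm, ?_⟩
  rw [div_unitaryPart hm hS]
  exact coprime_unitaryPart_of_disjoint hS sdiff_subset disjoint_sdiff

lemma unitaryPart_primeFactors_of_mem_uDivisors (hd : d ∈ uDivisors m) :
    unitaryPart m d.primeFactors = d := by
  obtain ⟨hdm, hm, -⟩ := mem_uDivisors.mp hd
  conv_rhs => rw [Nat.prod_primeFactors_pow_factorization (ne_zero_of_dvd_ne_zero hm hdm)]
  exact prod_congr rfl fun p hp => by rw [factorization_eq_of_mem_uDivisors hd hp]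

lemma uDivisors_eq_image_unitaryPart (hm : m ≠ 0) :
    uDivisors m = m.primeFactors.powerset.image (unitaryPart m) := by
  ext d
  simp only [mem_image, mem_powerset]
  constructor
  · intro hd
    exact ⟨d.primeFactors, Nat.primeFactors_mono (mem_uDivisors.mp hd).1 hm,
      unitaryPart_primeFactors_of_mem_uDivisors hd⟩
  · rintro ⟨S, hS, rfl⟩
    exact unitaryPart_mem_uDivisors hm hS

theorem sum_uDivisors_mul_mustar_div_eq_phiStar (hm : m ≠ 0) :
    ∑ d ∈ uDivisors m, (d : ℤ) * mustar (m / d) = phiStar m := by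
  have hinj : Set.InjOn (unitaryPart m) m.primeFactors.powerset := fun S hS T hT hST => by
    rw [← primeFactors_unitaryPart (mem_powerset.mp hS), hST,
      primeFactors_unitaryPart (mem_powerset.mp hT)]
  calc ∑ d ∈ uDivisors m, (d : ℤ) * mustar (m / d)
      = ∑ S ∈ m.primeFactors.powerset,
          (∏ p ∈ S, (p : ℤ) ^ m.factorization p) * ∏ _p ∈ m.primeFactors \ S, (-1) := by
        rw [uDivisors_eq_image_unitaryPart hm, sum_image hinj]
        refine sum_congr rfl fun S hS => ?_
        rw [div_unitaryPart hm (mem_powerset.mp hS), mustar,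
          primeFactors_unitaryPart sdiff_subset, prod_const, unitaryPart]
        push_cast; rfl
    _ = ∏ p ∈ m.primeFactors, ((p : ℤ) ^ m.factorization p + (-1)) := (prod_add _ _ _).symm
    _ = phiStar m := by
        rw [phiStar, Nat.cast_prod]
        refine prod_congr rfl fun p hp => ?_
        rw [Nat.cast_sub (Nat.one_le_pow _ _ (Nat.prime_of_mem_primeFactors hp).pos)]
        push_cast; ring

end UnitaryDivisors

lemma mustar_div_of_mem_uDivisors {d g q : ℕ} (hg : g ∈ uDivisors q) (hdg : d ∣ g) :
    mustar (q / d) = mustar (g / d) * mustar (q / g) := by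
  obtain ⟨hgq, hq0, hcop⟩ := mem_uDivisors.mp hg
  have hqd : q / d = g / d * (q / g) := by
    rw [← Nat.mul_div_cancel' hgq,
      Nat.mul_div_cancel_left _ (Nat.pos_of_ne_zero (ne_zero_of_dvd_ne_zero hq0 hgq)),
      Nat.div_mul_right_comm hdg]
  rw [hqd, mustar_mul (hcop.coprime_dvd_left (Nat.div_dvd_of_dvd hdg))]

lemma gcud_mem_uDivisors_right {n q : ℕ} (hn : n ≠ 0) (hq : q ≠ 0) :
    gcud n q ∈ uDivisors q := by
  obtain ⟨g, hg, hsup⟩ :=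
    exists_mem_eq_sup _ ⟨1, mem_inter.mpr ⟨one_mem_uDivisors hn, one_mem_uDivisors hq⟩⟩ id
  rw [gcud, hsup]
  exact (mem_inter.mp hg).2

theorem ctilde_holder (q n : ℕ) (hq : 0 < q) (hn : 0 < n) :
    (ctilde q n : ℚ) =
      (phiStar q : ℚ) * (mustar (q / gcud n q) : ℚ) / (phiStar (q / gcud n q) : ℚ) := by
  have hg := gcud_mem_uDivisors_right hn.ne' hq.ne'
  obtain ⟨hgq, hq0, hcop⟩ := mem_uDivisors.mp hg
  have hctilde : ctilde q n = phiStar (gcud n q) * mustar (q / gcud n q) := by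
    rw [ctilde, ← sum_uDivisors_mul_mustar_div_eq_phiStar (ne_zero_of_dvd_ne_zero hq0 hgq),
      sum_mul]
    exact sum_congr rfl fun d hd => by
      rw [mustar_div_of_mem_uDivisors hg (mem_uDivisors.mp hd).1, mul_assoc]
  have hphiStar : phiStar q = phiStar (gcud n q) * phiStar (q / gcud n q) := by
    rw [← phiStar_mul hcop, Nat.mul_div_cancel' hgq]
  have := (phiStar_pos (q / gcud n q)).ne'
  rw [hctilde, hphiStar]
  push_cast
  field_simp
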